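/- Let X ∈ ℝ^{D×D} be invertible with all columns of unit Euclidean norm. Then ‖X^{-1}‖_{1,2} := Σ_{d=1}^D ‖(X^{-1})_{d·}‖_2 ≥ D, with equality if and only if X is orthonormal. -/

import Mathlib

open Matrix

noncomputable def rowNorm {D : ℕ} (β : Matrix (Fin D) (Fin D) ℝ) (d : Fin D) : ℝ :=
  Real.sqrt (∑ j, (β d j) ^ 2)

noncomputable def colNorm {D : ℕ} (X : Matrix (Fin D) (Fin D) ℝ) (d : Fin D) : ℝ :=
  Real.sqrt (∑ i, (X i d) ^ 2)

/-
Row `d` of `X⁻¹` has dot product `1` with column `d` of `X`, which is a unit vector. Expanding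
`‖r - c‖²` for such vectors `r`, `c` gives `‖r‖² = 1 + ‖r - c‖²`, so every row of `X⁻¹` has norm
at least `1`, with equality exactly when it is the transposed column. Summing over the rows, the
bound `D` is attained iff `X⁻¹ = Xᵀ`, i.e. iff `X` is orthonormal.
-/

section DotProduct

variable {ι : Type*} [Fintype ι]

theorem dotProduct_self_eq_one_add_of_dotProduct_eq_one {R : Type*} [CommRing R] {r c : ι → R}
    (hrc : r ⬝ᵥ c = 1) (hc : c ⬝ᵥ c = 1) : r ⬝ᵥ r = 1 + (r - c) ⬝ᵥ (r - c) := by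
  rw [sub_dotProduct, dotProduct_sub, dotProduct_sub, dotProduct_comm c r, hrc, hc]
  ring

variable {r c : ι → ℝ}

theorem one_le_sqrt_dotProduct_self (hrc : r ⬝ᵥ c = 1) (hc : c ⬝ᵥ c = 1) :
    1 ≤ √(r ⬝ᵥ r) := by
  rw [Real.one_le_sqrt, dotProduct_self_eq_one_add_of_dotProduct_eq_one hrc hc]
  exact le_add_of_nonneg_right (Fintype.sum_nonneg fun _ => mul_self_nonneg _)

theorem sqrt_dotProduct_self_eq_one_iff (hrc : r ⬝ᵥ c = 1) (hc : c ⬝ᵥ c = 1) :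
    √(r ⬝ᵥ r) = 1 ↔ r = c := by
  rw [Real.sqrt_eq_one, dotProduct_self_eq_one_add_of_dotProduct_eq_one hrc hc,
    add_eq_left, dotProduct_self_eq_zero, sub_eq_zero]

end DotProduct

theorem rowNorm_eq_sqrt_dotProduct {D : ℕ} (β : Matrix (Fin D) (Fin D) ℝ) (d : Fin D) :
    rowNorm β d = √(β d ⬝ᵥ β d) := by
  simp only [rowNorm, dotProduct, sq]

theorem colNorm_eq_rowNorm_transpose {D : ℕ} (X : Matrix (Fin D) (Fin D) ℝ) (d : Fin D) :
    colNorm X d = rowNorm Xᵀ d :=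
  rfl

section UnitColumns

variable {D : ℕ} {X : Matrix (Fin D) (Fin D) ℝ}

theorem dotProduct_inv_row_transpose_row (hX : IsUnit X) (d : Fin D) :
    X⁻¹ d ⬝ᵥ Xᵀ d = 1 := by
  have h := congrFun (congrFun (nonsing_inv_mul X ((isUnit_iff_isUnit_det X).mp hX)) d) d
  rwa [mul_apply', one_apply_eq] at h

theorem dotProduct_transpose_row_self_of_colNorm_eq_one {d : Fin D} (hcol : colNorm X d = 1) :
    Xᵀ d ⬝ᵥ Xᵀ d = 1 := by
  rwa [colNorm_eq_rowNorm_transpose, rowNorm_eq_sqrt_dotProduct, Real.sqrt_eq_one] at hcol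

variable (hX : IsUnit X) (hcols : ∀ d, colNorm X d = 1)
include hX hcols

theorem one_le_rowNorm_inv (d : Fin D) : 1 ≤ rowNorm X⁻¹ d := by
  rw [rowNorm_eq_sqrt_dotProduct]
  exact one_le_sqrt_dotProduct_self (dotProduct_inv_row_transpose_row hX d)
    (dotProduct_transpose_row_self_of_colNorm_eq_one (hcols d))

theorem rowNorm_inv_eq_one_iff (d : Fin D) : rowNorm X⁻¹ d = 1 ↔ X⁻¹ d = Xᵀ d := by
  rw [rowNorm_eq_sqrt_dotProduct]
  exact sqrt_dotProduct_self_eq_one_iff (dotProduct_inv_row_transpose_row hX d)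
    (dotProduct_transpose_row_self_of_colNorm_eq_one (hcols d))

end UnitColumns

theorem inv_norm12_ge_D {D : ℕ}
    (X : Matrix (Fin D) (Fin D) ℝ) (hX : IsUnit X)
    (hcols : ∀ d : Fin D, colNorm X d = 1) :
    (D : ℝ) ≤ ∑ d, rowNorm X⁻¹ d ∧
      ((∑ d, rowNorm X⁻¹ d) = D ↔ Xᵀ * X = 1) := by
  have hle : ∀ d ∈ Finset.univ, (1 : ℝ) ≤ rowNorm X⁻¹ d :=
    fun d _ => one_le_rowNorm_inv hX hcols d
  have hD : (D : ℝ) = ∑ _d : Fin D, (1 : ℝ) := by simp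
  refine ⟨hD ▸ Finset.sum_le_sum hle, ?_⟩
  calc (∑ d, rowNorm X⁻¹ d) = D ↔ ∀ d, rowNorm X⁻¹ d = 1 := by
        rw [hD, eq_comm, Finset.sum_eq_sum_iff_of_le hle]
        simp only [Finset.mem_univ, true_implies, eq_comm]
    _ ↔ X⁻¹ = Xᵀ := (forall_congr' (rowNorm_inv_eq_one_iff hX hcols)).trans funext_iff.symm
    _ ↔ Xᵀ * X = 1 := ⟨fun h => h ▸ nonsing_inv_mul X ((isUnit_iff_isUnit_det X).mp hX),
        inv_eq_left_inv⟩
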